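/- Fix p ≥ 2. Let a₀,…,a_n, b : ℂ → ℂ be holomorphic with a₀(w)^p − Σ_{j=1}^n a_j(w)^p = 0 for all w, and let u : Ω → ℂ be a C^p function implicitly defined by Σ_μ a_μ(u)x_μ − b(u) = 0 with δ' nonvanishing. Then for every k with 1 ≤ k ≤ p, u satisfies the higher-order equation □_p(u^k) := ∂₀^p(u^k) − Σ_{j=1}^n ∂ⱼ^p(u^k) = 0. -/

import Mathlib

/-
On `ℂ × ℝ^{1+n}`, with points `(w, x)`, differentiating `f (u x)` in a direction `e` is the
derivative along the vector field `V_e = (-(Σ a_ν e_ν) / δ', e)`, to which the graph `w = u x`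
is tangent by implicit differentiation. On functions of `w` alone, `V_e` acts as `Σ a_ν e_ν`
times the field `W = (-1 / δ', 0)`. A direct computation gives `[V_e, W] = 0`, so the two
derivations commute and induction yields
`∂_e^{m+1} f(u) = (W^m ((Σ a_ν e_ν)^{m+1} · W f))(u, x)`.
Since `W^m` does not depend on `e`, linearity and `a₀^p = Σ_j a_j^p` make `□_p (u^k)` vanish.
-/

/-- Partial derivative in the μ-th coordinate direction. -/
noncomputable def pd {n : ℕ} (μ : Fin (n+1)) (u : (Fin (n+1) → ℝ) → ℂ) :
    (Fin (n+1) → ℝ) → ℂ :=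
  fun x => fderiv ℝ u x (Pi.single μ 1)

/-- The higher-order operator □_p = ∂₀^p − Σ_{j=1}^n ∂ⱼ^p on ℝ^{1+n}. -/
noncomputable def boxp {n : ℕ} (p : ℕ) (u : (Fin (n+1) → ℝ) → ℂ) :
    (Fin (n+1) → ℝ) → ℂ :=
  fun x => (pd 0)^[p] u x - ∑ j : Fin n, (pd j.succ)^[p] u x

open Set Filter Topology
open scoped ContDiff

section DerivAlong

variable {X : Type*} [NormedAddCommGroup X] [NormedSpace ℝ X]

noncomputable def derivAlong (V : X → X) (F : X → ℂ) : X → ℂ :=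
  fun q => fderiv ℝ F q (V q)

variable {V W : X → X} {F G : X → ℂ} {U : Set X} {q : X}

theorem ContDiffOn.derivAlong (hF : ContDiffOn ℝ ∞ F U) (hV : ContDiffOn ℝ ∞ V U)
    (hU : IsOpen U) : ContDiffOn ℝ ∞ (derivAlong V F) U :=
  (hF.fderiv_of_isOpen hU le_rfl).clm_apply hV

theorem ContDiffOn.iterate_derivAlong (hF : ContDiffOn ℝ ∞ F U) (hV : ContDiffOn ℝ ∞ V U)
    (hU : IsOpen U) (m : ℕ) : ContDiffOn ℝ ∞ ((_root_.derivAlong V)^[m] F) U := by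
  induction m with
  | zero => exact hF
  | succ m ih => rw [Function.iterate_succ_apply']; exact ih.derivAlong hV hU

theorem derivAlong_congr (hU : IsOpen U) (h : EqOn F G U) :
    EqOn (derivAlong V F) (derivAlong V G) U := fun q hq => by
  simp only [derivAlong, (h.eventuallyEq_of_mem (hU.mem_nhds hq)).fderiv_eq]

theorem iterate_derivAlong_congr (hU : IsOpen U) (h : EqOn F G U) (m : ℕ) :
    EqOn ((derivAlong V)^[m] F) ((derivAlong V)^[m] G) U := by
  induction m with
  | zero => exact h
  | succ m ih =>
    simp only [Function.iterate_succ_apply']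
    exact derivAlong_congr hU ih

theorem derivAlong_mul (hF : DifferentiableAt ℝ F q) (hG : DifferentiableAt ℝ G q) :
    derivAlong V (F * G) q = derivAlong V F q * G q + F q * derivAlong V G q := by
  simp only [derivAlong, fderiv_mul hF hG, add_apply, smul_apply, smul_eq_mul]
  ring

theorem iterate_derivAlong_sum {ι : Type*} (s : Finset ι) {G : ι → X → ℂ}
    (hG : ∀ i ∈ s, ContDiffOn ℝ ∞ (G i) U) (hV : ContDiffOn ℝ ∞ V U) (hU : IsOpen U) (m : ℕ) :
    EqOn ((derivAlong V)^[m] (∑ i ∈ s, G i)) (∑ i ∈ s, (derivAlong V)^[m] (G i)) U := by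
  induction m with
  | zero => exact fun _ _ => rfl
  | succ m ih =>
    intro q hq
    have hd : ∀ i ∈ s, DifferentiableAt ℝ ((derivAlong V)^[m] (G i)) q := fun i hi =>
      ((hG i hi).iterate_derivAlong hV hU m).differentiableOn (by simp) q hq
        |>.differentiableAt (hU.mem_nhds hq)
    simp only [Function.iterate_succ_apply']
    rw [derivAlong_congr hU ih hq]
    simp only [derivAlong, fderiv_sum hd, sum_apply, Finset.sum_apply]

theorem derivAlong_comm (hF : ContDiffAt ℝ 2 F q) (hV : DifferentiableAt ℝ V q)
    (hW : DifferentiableAt ℝ W q) (hVW : VectorField.lieBracket ℝ V W q = 0) :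
    derivAlong V (derivAlong W F) q = derivAlong W (derivAlong V F) q := by
  have h := VectorField.fderiv_apply_lieBracket hF (by simp) hW hV
  rw [hVW, map_zero] at h
  exact sub_eq_zero.mp h.symm

theorem iterate_derivAlong_comm (hF : ContDiffOn ℝ ∞ F U) (hV : ContDiffOn ℝ ∞ V U)
    (hW : ContDiffOn ℝ ∞ W U) (hU : IsOpen U)
    (hVW : ∀ q ∈ U, VectorField.lieBracket ℝ V W q = 0) (m : ℕ) :
    EqOn (derivAlong V ((derivAlong W)^[m] F)) ((derivAlong W)^[m] (derivAlong V F)) U := by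
  induction m with
  | zero => exact fun _ _ => rfl
  | succ m ih =>
    intro q hq
    have hnhds := hU.mem_nhds hq
    simp only [Function.iterate_succ_apply']
    rw [derivAlong_comm
      (((hF.iterate_derivAlong hW hU m).contDiffAt hnhds).of_le (WithTop.coe_le_coe.mpr le_top))
      ((hV.differentiableOn (by simp)).differentiableAt hnhds)
      ((hW.differentiableOn (by simp)).differentiableAt hnhds) (hVW q hq)]
    exact derivAlong_congr hU ih hq

theorem iterate_fderiv_apply_comp_eqOn {E : Type*} [NormedAddCommGroup E] [NormedSpace ℝ E]
    {φ : E → X} {Ω : Set E} (v : E) (hΩ : IsOpen Ω) (hU : IsOpen U) (hF : ContDiffOn ℝ ∞ F U)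
    (hV : ContDiffOn ℝ ∞ V U) (hφU : MapsTo φ Ω U) (hφ : ∀ y ∈ Ω, DifferentiableAt ℝ φ y)
    (htan : ∀ y ∈ Ω, fderiv ℝ φ y v = V (φ y)) (m : ℕ) :
    EqOn ((fun g y => fderiv ℝ g y v)^[m] (F ∘ φ)) ((derivAlong V)^[m] F ∘ φ) Ω := by
  induction m with
  | zero => exact fun _ _ => rfl
  | succ m ih =>
    intro y hy
    have hG : DifferentiableAt ℝ ((derivAlong V)^[m] F) (φ y) :=
      ((hF.iterate_derivAlong hV hU m).differentiableOn (by simp) _ (hφU hy)).differentiableAt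
        (hU.mem_nhds (hφU hy))
    simp only [Function.iterate_succ_apply', Function.comp_apply]
    rw [(ih.eventuallyEq_of_mem (hΩ.mem_nhds hy)).fderiv_eq, fderiv_comp y hG (hφ y hy)]
    simp [derivAlong, htan y hy]

end DerivAlong

section Lift

variable {E : Type*} [NormedAddCommGroup E] [NormedSpace ℝ E] {g : ℂ → ℂ}

theorem hasFDerivAt_comp_fst (hg : Differentiable ℂ g) (q : ℂ × E) :
    HasFDerivAt (fun q : ℂ × E => g q.1) (deriv g q.1 • ContinuousLinearMap.fst ℝ ℂ E) q :=
  (hg q.1).hasDerivAt.comp_hasFDerivAt q hasFDerivAt_fst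

theorem contDiff_comp_fst (hg : Differentiable ℂ g) : ContDiff ℝ ∞ (fun q : ℂ × E => g q.1) :=
  (hg.contDiff.restrict_scalars ℝ).comp contDiff_fst

end Lift

section ImplicitForm

variable {ι : Type*} [Fintype ι] {c : ι → ℂ → ℂ} {d : ℂ → ℂ}

/-- The paper's `δ = Σ a_μ(w) x_μ - b(w)` is `implicitForm a b`, and
`δ' = implicitForm (deriv ∘ a) (deriv b)`. -/
noncomputable def implicitForm (c : ι → ℂ → ℂ) (d : ℂ → ℂ) (q : ℂ × (ι → ℝ)) : ℂ :=
  ∑ ν, c ν q.1 * (q.2 ν : ℂ) - d q.1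

noncomputable def coordCLM (ν : ι) : ℂ × (ι → ℝ) →L[ℝ] ℂ :=
  Complex.ofRealCLM ∘L ContinuousLinearMap.proj (φ := fun _ : ι => ℝ) ν ∘L
    ContinuousLinearMap.snd ℝ ℂ (ι → ℝ)

theorem hasFDerivAt_implicitForm (hc : ∀ ν, Differentiable ℂ (c ν)) (hd : Differentiable ℂ d)
    (q : ℂ × (ι → ℝ)) :
    HasFDerivAt (implicitForm c d)
      (implicitForm (fun ν => deriv (c ν)) (deriv d) q • ContinuousLinearMap.fst ℝ ℂ (ι → ℝ)
        + ∑ ν, c ν q.1 • coordCLM ν) q := by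
  have h := (HasFDerivAt.fun_sum (u := Finset.univ) fun ν _ =>
    (hasFDerivAt_comp_fst (hc ν) q).mul (coordCLM ν).hasFDerivAt).sub
      (hasFDerivAt_comp_fst hd q)
  refine h.congr_fderiv (ContinuousLinearMap.ext fun z => ?_)
  simp only [coordCLM, ContinuousLinearMap.comp_apply, ContinuousLinearMap.coe_snd',
    ContinuousLinearMap.proj_apply, Complex.ofRealCLM_apply, Finset.sum_add_distrib, sub_apply,
    add_apply, sum_apply, smul_apply, smul_eq_mul, ContinuousLinearMap.coe_fst', mul_comm,
    implicitForm]
  rw [mul_sub, Finset.mul_sum]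
  simp only [mul_assoc]
  ring

theorem contDiff_implicitForm (hc : ∀ ν, Differentiable ℂ (c ν)) (hd : Differentiable ℂ d) :
    ContDiff ℝ ∞ (implicitForm c d) :=
  (ContDiff.sum fun ν _ => (contDiff_comp_fst (hc ν)).mul (coordCLM ν).contDiff).sub
    (contDiff_comp_fst hd)

theorem isOpen_implicitForm_ne_zero (hc : ∀ ν, Differentiable ℂ (c ν))
    (hd : Differentiable ℂ d) : IsOpen {q | implicitForm c d q ≠ 0} :=
  isOpen_ne_fun (contDiff_implicitForm hc hd).continuous continuous_const

end ImplicitForm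

section Fields

variable {ι : Type*} [Fintype ι] (a : ι → ℂ → ℂ) (b : ℂ → ℂ)

noncomputable def coeffAlong (e : ι → ℝ) (w : ℂ) : ℂ :=
  ∑ ν, a ν w * (e ν : ℂ)

noncomputable def verticalField (q : ℂ × (ι → ℝ)) : ℂ × (ι → ℝ) :=
  (-(implicitForm (fun ν => deriv (a ν)) (deriv b) q)⁻¹, 0)

noncomputable def graphField (e : ι → ℝ) (q : ℂ × (ι → ℝ)) : ℂ × (ι → ℝ) :=
  (-coeffAlong a e q.1 * (implicitForm (fun ν => deriv (a ν)) (deriv b) q)⁻¹, e)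

variable {a b}

theorem differentiable_coeffAlong (ha : ∀ ν, Differentiable ℂ (a ν)) (e : ι → ℝ) :
    Differentiable ℂ (coeffAlong a e) :=
  Differentiable.fun_sum fun ν _ => (ha ν).mul_const _

theorem deriv_coeffAlong (ha : ∀ ν, Differentiable ℂ (a ν)) (e : ι → ℝ) (w : ℂ) :
    deriv (coeffAlong a e) w = coeffAlong (fun ν => deriv (a ν)) e w := by
  unfold coeffAlong
  rw [deriv_fun_sum fun ν _ => ((ha ν).mul_const _).differentiableAt]
  exact Finset.sum_congr rfl fun ν _ => deriv_mul_const (ha ν).differentiableAt _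

theorem coeffAlong_single [DecidableEq ι] (μ : ι) : coeffAlong a (Pi.single μ 1) = a μ := by
  funext w
  simp [coeffAlong, Pi.single_apply, apply_ite]

theorem derivAlong_verticalField_comp_fst {g : ℂ → ℂ} (hg : Differentiable ℂ g)
    (q : ℂ × (ι → ℝ)) :
    derivAlong (verticalField a b) (fun q => g q.1) q
      = -deriv g q.1 * (implicitForm (fun ν => deriv (a ν)) (deriv b) q)⁻¹ := by
  simp [derivAlong, (hasFDerivAt_comp_fst hg q).fderiv, verticalField]

theorem derivAlong_graphField_comp_fst {g : ℂ → ℂ} (hg : Differentiable ℂ g) (e : ι → ℝ) :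
    derivAlong (graphField a b e) (fun q => g q.1)
      = (fun q => coeffAlong a e q.1) * derivAlong (verticalField a b) (fun q => g q.1) := by
  funext q
  rw [Pi.mul_apply, derivAlong_verticalField_comp_fst hg]
  simp only [derivAlong, (hasFDerivAt_comp_fst hg q).fderiv, graphField, neg_mul, smul_apply,
    ContinuousLinearMap.coe_fst', smul_eq_mul, mul_neg, neg_inj]
  ring

variable (ha : ∀ ν, Differentiable ℂ (a ν)) (hb : Differentiable ℂ b)
include ha hb

theorem contDiffOn_verticalField :
    ContDiffOn ℝ ∞ (verticalField a b)
      {q | implicitForm (fun ν => deriv (a ν)) (deriv b) q ≠ 0} :=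
  ((contDiff_implicitForm (fun ν => (ha ν).deriv) hb.deriv).contDiffOn.inv
    fun _ hq => hq).neg.prodMk contDiffOn_const

theorem contDiffOn_graphField (e : ι → ℝ) :
    ContDiffOn ℝ ∞ (graphField a b e)
      {q | implicitForm (fun ν => deriv (a ν)) (deriv b) q ≠ 0} :=
  ((contDiff_comp_fst (differentiable_coeffAlong ha e)).neg.contDiffOn.mul
    ((contDiff_implicitForm (fun ν => (ha ν).deriv) hb.deriv).contDiffOn.inv
      fun _ hq => hq)).prodMk contDiffOn_const

theorem lieBracket_graphField_verticalField (e : ι → ℝ) {q : ℂ × (ι → ℝ)}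
    (hq : implicitForm (fun ν => deriv (a ν)) (deriv b) q ≠ 0) :
    VectorField.lieBracket ℝ (graphField a b e) (verticalField a b) q = 0 := by
  have hκ := (hasDerivAt_inv hq).comp_hasFDerivAt q
    (hasFDerivAt_implicitForm (fun ν => (ha ν).deriv) hb.deriv q)
  have hW : HasFDerivAt (verticalField a b) _ q :=
    hκ.fun_neg.prodMk (hasFDerivAt_const (0 : ι → ℝ) q)
  have hV : HasFDerivAt (graphField a b e) _ q :=
    ((hasFDerivAt_comp_fst (differentiable_coeffAlong ha e) q).fun_neg.fun_mul hκ).prodMk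
      (hasFDerivAt_const e q)
  rw [VectorField.lieBracket, hW.fderiv, hV.fderiv]
  ext
  · simp only [coordCLM, smul_add, neg_smul, neg_add_rev, neg_neg, graphField, coeffAlong,
      neg_mul, ContinuousLinearMap.prod_apply, add_apply, smul_apply, sum_apply,
      ContinuousLinearMap.comp_apply, ContinuousLinearMap.coe_snd',
      ContinuousLinearMap.proj_apply, Complex.ofRealCLM_apply, smul_eq_mul,
      ContinuousLinearMap.coe_fst', mul_neg, zero_apply, smul_neg, Function.comp_apply,
      deriv_coeffAlong ha, verticalField, Pi.zero_apply, Complex.ofReal_zero, mul_zero,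
      Finset.sum_const_zero, add_zero, neg_apply, Prod.mk_sub_mk, sub_self, Prod.fst_zero]
    field_simp
    ring
  · simp

theorem fderiv_graph_apply {u : (ι → ℝ) → ℂ} {y : ι → ℝ} (hu : DifferentiableAt ℝ u y)
    (himp : (fun y' => implicitForm a b (u y', y')) =ᶠ[𝓝 y] fun _ => 0)
    (hδ : implicitForm (fun ν => deriv (a ν)) (deriv b) (u y, y) ≠ 0) (e : ι → ℝ) :
    fderiv ℝ (fun y' => (u y', y')) y e = graphField a b e (u y, y) := by
  have hφ : HasFDerivAt (fun y' => (u y', y')) _ y := hu.hasFDerivAt.prodMk (hasFDerivAt_id y)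
  have hderiv := congrArg (· e)
    (((hasFDerivAt_implicitForm ha hb (u y, y)).comp (f := fun y' => (u y', y')) y hφ).unique
      ((hasFDerivAt_const 0 y).congr_of_eventuallyEq himp))
  simp only [coordCLM, ContinuousLinearMap.add_comp, ContinuousLinearMap.smul_comp,
    ContinuousLinearMap.fst_comp_prod, add_apply, smul_apply, smul_eq_mul,
    ContinuousLinearMap.comp_apply, ContinuousLinearMap.prod_apply, ContinuousLinearMap.id_apply,
    sum_apply, ContinuousLinearMap.coe_snd', ContinuousLinearMap.proj_apply,
    Complex.ofRealCLM_apply, zero_apply] at hderiv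
  rw [hφ.fderiv]
  ext
  · simp only [ContinuousLinearMap.prod_apply, graphField, coeffAlong, neg_mul]
    field_simp
    linear_combination hderiv
  · simp [graphField]

variable {f : ℂ → ℂ} (hf : Differentiable ℂ f) (e : ι → ℝ)
include hf

theorem derivAlong_graphField_pow_mul (j : ℕ) :
    EqOn (derivAlong (graphField a b e)
        ((fun q => coeffAlong a e q.1 ^ j) * derivAlong (verticalField a b) (fun q => f q.1)))
      (derivAlong (verticalField a b)
        ((fun q => coeffAlong a e q.1 ^ (j + 1)) * derivAlong (verticalField a b) (fun q => f q.1)))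
      {q | implicitForm (fun ν => deriv (a ν)) (deriv b) q ≠ 0} := by
  intro q hq
  have hU := isOpen_implicitForm_ne_zero (fun ν => (ha ν).deriv) hb.deriv
  have hpow (i : ℕ) : DifferentiableAt ℝ (fun q => coeffAlong a e q.1 ^ i) q :=
    (contDiff_comp_fst ((differentiable_coeffAlong ha e).fun_pow i)).differentiable (by simp) q
  have hA : DifferentiableAt ℝ (fun q => coeffAlong a e q.1) q := by simpa using hpow 1
  have hH : DifferentiableAt ℝ (derivAlong (verticalField a b) (fun q => f q.1)) q :=
    (((contDiff_comp_fst hf).contDiffOn.derivAlong (contDiffOn_verticalField ha hb)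
      hU).differentiableOn (by simp)).differentiableAt (hU.mem_nhds hq)
  have hcomm : derivAlong (graphField a b e) (derivAlong (verticalField a b) (fun q => f q.1)) q
      = derivAlong (verticalField a b) ((fun q => coeffAlong a e q.1) *
          derivAlong (verticalField a b) (fun q => f q.1)) q := by
    rw [derivAlong_comm ((contDiff_comp_fst hf).contDiffAt.of_le (WithTop.coe_le_coe.mpr le_top))
      ((contDiffOn_graphField ha hb e).differentiableOn (by simp) q hq |>.differentiableAt
        (hU.mem_nhds hq))
      ((contDiffOn_verticalField ha hb).differentiableOn (by simp) q hq |>.differentiableAt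
        (hU.mem_nhds hq))
      (lieBracket_graphField_verticalField ha hb e hq), derivAlong_graphField_comp_fst hf e]
  have hsucc : (fun q : ℂ × (ι → ℝ) => coeffAlong a e q.1 ^ (j + 1))
      = (fun q => coeffAlong a e q.1 ^ j) * fun q => coeffAlong a e q.1 :=
    funext fun _ => pow_succ _ _
  rw [derivAlong_mul (hpow j) hH, derivAlong_mul (hpow (j + 1)) hH, hcomm,
    derivAlong_mul hA hH, hsucc, derivAlong_mul (hpow j) hA,
    derivAlong_graphField_comp_fst ((differentiable_coeffAlong ha e).fun_pow j) e]
  simp only [Pi.mul_apply]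
  ring

theorem iterate_derivAlong_graphField_comp_fst (m : ℕ) :
    EqOn ((derivAlong (graphField a b e))^[m + 1] (fun q => f q.1))
      ((derivAlong (verticalField a b))^[m]
        ((fun q => coeffAlong a e q.1 ^ (m + 1)) * derivAlong (verticalField a b) (fun q => f q.1)))
      {q | implicitForm (fun ν => deriv (a ν)) (deriv b) q ≠ 0} := by
  have hU := isOpen_implicitForm_ne_zero (fun ν => (ha ν).deriv) hb.deriv
  induction m with
  | zero => intro q _; simp [derivAlong_graphField_comp_fst hf e]
  | succ m ih =>
    intro q hq
    have hsmooth : ContDiffOn ℝ ∞ ((fun q => coeffAlong a e q.1 ^ (m + 1)) *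
        derivAlong (verticalField a b) (fun q => f q.1)) _ :=
      (contDiff_comp_fst ((differentiable_coeffAlong ha e).fun_pow (m + 1))).contDiffOn.mul
        ((contDiff_comp_fst hf).contDiffOn.derivAlong (contDiffOn_verticalField ha hb) hU)
    rw [Function.iterate_succ_apply', derivAlong_congr hU ih hq,
      iterate_derivAlong_comm hsmooth (contDiffOn_graphField ha hb e)
        (contDiffOn_verticalField ha hb) hU
        (fun _ hq => lieBracket_graphField_verticalField ha hb e hq) m hq,
      iterate_derivAlong_congr hU (derivAlong_graphField_pow_mul ha hb hf e (m + 1)) m hq,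
      ← Function.iterate_succ_apply]

end Fields

theorem iterate_pd_comp_eqOn {n : ℕ} {a : Fin (n + 1) → ℂ → ℂ} {b f : ℂ → ℂ}
    (ha : ∀ ν, Differentiable ℂ (a ν)) (hb : Differentiable ℂ b) (hf : Differentiable ℂ f)
    {Ω : Set (Fin (n + 1) → ℝ)} (hΩ : IsOpen Ω) {u : (Fin (n + 1) → ℝ) → ℂ}
    (hu : DifferentiableOn ℝ u Ω) (himp : ∀ x ∈ Ω, implicitForm a b (u x, x) = 0)
    (hδ : ∀ x ∈ Ω, implicitForm (fun ν => deriv (a ν)) (deriv b) (u x, x) ≠ 0)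
    (μ : Fin (n + 1)) (m : ℕ) :
    EqOn ((pd μ)^[m + 1] (fun y => f (u y)))
      ((derivAlong (verticalField a b))^[m]
          ((fun q => a μ q.1 ^ (m + 1)) * derivAlong (verticalField a b) (fun q => f q.1)) ∘
        fun y => (u y, y)) Ω := by
  intro x hx
  have hud : ∀ y ∈ Ω, DifferentiableAt ℝ u y := fun y hy => hu.differentiableAt (hΩ.mem_nhds hy)
  have htan : ∀ y ∈ Ω, fderiv ℝ (fun y' => (u y', y')) y (Pi.single μ 1)
      = graphField a b (Pi.single μ 1) (u y, y) := fun y hy =>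
    fderiv_graph_apply ha hb (hud y hy) (eventually_of_mem (hΩ.mem_nhds hy) himp) (hδ y hy) _
  have hgraph := iterate_fderiv_apply_comp_eqOn (F := fun q => f q.1) (Pi.single μ 1) hΩ
    (isOpen_implicitForm_ne_zero (fun ν => (ha ν).deriv) hb.deriv)
    (contDiff_comp_fst hf).contDiffOn (contDiffOn_graphField ha hb _) hδ
    (fun y hy => (hud y hy).prodMk differentiableAt_id) htan (m + 1) hx
  have hformula := iterate_derivAlong_graphField_comp_fst ha hb hf (Pi.single μ 1) m (hδ x hx)
  rw [coeffAlong_single] at hformula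
  exact hgraph.trans hformula

theorem stmt10 {n : ℕ} (p : ℕ) (hp : 2 ≤ p)
    (a : Fin (n+1) → ℂ → ℂ) (b : ℂ → ℂ)
    (ha : ∀ μ, Differentiable ℂ (a μ)) (hb : Differentiable ℂ b)
    (hconstraint : ∀ w : ℂ, (a 0 w)^p - ∑ j : Fin n, (a j.succ w)^p = 0)
    (Ω : Set (Fin (n+1) → ℝ)) (hΩ : IsOpen Ω)
    (u : (Fin (n+1) → ℝ) → ℂ) (hu : ContDiffOn ℝ p u Ω)
    (himp : ∀ x ∈ Ω, ∑ μ, a μ (u x) * (x μ : ℂ) - b (u x) = 0)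
    (hδ' : ∀ x ∈ Ω, ∑ μ, deriv (a μ) (u x) * (x μ : ℂ) - deriv b (u x) ≠ 0) :
    ∀ k : ℕ, 1 ≤ k → k ≤ p → ∀ x ∈ Ω, boxp p (fun y => (u y)^k) x = 0 := by
  intro k _ _ x hx
  obtain ⟨m, rfl⟩ : ∃ m, p = m + 1 := ⟨p - 1, by omega⟩
  have hpd (μ : Fin (n + 1)) := iterate_pd_comp_eqOn ha hb (differentiable_pow k) hΩ
    (hu.differentiableOn (by simp)) himp hδ' μ m hx
  have hU := isOpen_implicitForm_ne_zero (fun ν => (ha ν).deriv) hb.deriv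
  have hG (μ : Fin (n + 1)) : ContDiffOn ℝ ∞
      ((fun q => a μ q.1 ^ (m + 1)) * derivAlong (verticalField a b) (fun q => q.1 ^ k))
      {q | implicitForm (fun ν => deriv (a ν)) (deriv b) q ≠ 0} :=
    (contDiff_comp_fst ((ha μ).fun_pow (m + 1))).contDiffOn.mul
      ((contDiff_comp_fst (differentiable_pow k)).contDiffOn.derivAlong
        (contDiffOn_verticalField ha hb) hU)
  have hsum := iterate_derivAlong_sum
    (G := fun j : Fin n => (fun q => a j.succ q.1 ^ (m + 1)) *
      derivAlong (verticalField a b) (fun q => q.1 ^ k))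
    Finset.univ (fun j _ => hG j.succ) (contDiffOn_verticalField ha hb) hU m
    (show (u x, x) ∈ {q | implicitForm (fun ν => deriv (a ν)) (deriv b) q ≠ 0} from hδ' x hx)
  have hconst : (fun q => a 0 q.1 ^ (m + 1)) * derivAlong (verticalField a b) (fun q => q.1 ^ k)
      = ∑ j : Fin n, (fun q => a j.succ q.1 ^ (m + 1)) *
          derivAlong (verticalField a b) (fun q => q.1 ^ k) := by
    funext q
    simp only [Finset.sum_apply, Pi.mul_apply, ← Finset.sum_mul]
    rw [sub_eq_zero.mp (hconstraint q.1)]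
  simp only [boxp]
  rw [hpd 0, Finset.sum_congr rfl fun j _ => hpd j.succ]
  simp only [Function.comp_apply, ← Finset.sum_apply, ← hsum, ← hconst]
  exact sub_self _
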